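/- Let L be the 11-dimensional complex span of the two-qubit operators I⊗I, I⊗X, I⊗Y, X⊗Z, Y⊗Z, I⊗Z, X⊗Y, Y⊗Y, X⊗X, Y⊗X, Z⊗I, and let |F0⟩ = |1⟩⊗|4⟩ − |4⟩⊗|1⟩ − |2⟩⊗|3⟩ + |3⟩⊗|2⟩ in C⁴⊗C⁴. Then a 4×4 complex matrix A belongs to L if and only if (A⊗I₄ + I₄⊗A)|F0⟩ is a complex scalar multiple of |F0⟩ (where I₄ is the 4×4 identity). In particular, each of the ten non-identity spanning operators A_i satisfies (A_i⊗I₄ + I₄⊗A_i)|F0⟩ = 0. -/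
import Mathlib


noncomputable section

open Matrix Kronecker Complex

/- The eleven two-qubit operators (explicit 4×4 matrices in the basis
`00,01,10,11` ↔ `1,2,3,4`): `I⊗I, I⊗X, I⊗Y, X⊗Z, Y⊗Z, I⊗Z, X⊗Y, Y⊗Y, X⊗X, Y⊗X, Z⊗I`. -/
def mII : Matrix (Fin 4) (Fin 4) ℂ := 1
def mIX : Matrix (Fin 4) (Fin 4) ℂ := !![0,1,0,0; 1,0,0,0; 0,0,0,1; 0,0,1,0]
def mIY : Matrix (Fin 4) (Fin 4) ℂ := !![0,-I,0,0; I,0,0,0; 0,0,0,-I; 0,0,I,0]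
def mXZ : Matrix (Fin 4) (Fin 4) ℂ := !![0,0,1,0; 0,0,0,-1; 1,0,0,0; 0,-1,0,0]
def mYZ : Matrix (Fin 4) (Fin 4) ℂ := !![0,0,-I,0; 0,0,0,I; I,0,0,0; 0,-I,0,0]
def mIZ : Matrix (Fin 4) (Fin 4) ℂ := !![1,0,0,0; 0,-1,0,0; 0,0,1,0; 0,0,0,-1]
def mXY : Matrix (Fin 4) (Fin 4) ℂ := !![0,0,0,-I; 0,0,I,0; 0,-I,0,0; I,0,0,0]
def mYY : Matrix (Fin 4) (Fin 4) ℂ := !![0,0,0,-1; 0,0,1,0; 0,1,0,0; -1,0,0,0]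
def mXX : Matrix (Fin 4) (Fin 4) ℂ := !![0,0,0,1; 0,0,1,0; 0,1,0,0; 1,0,0,0]
def mYX : Matrix (Fin 4) (Fin 4) ℂ := !![0,0,0,-I; 0,0,-I,0; 0,I,0,0; I,0,0,0]
def mZI : Matrix (Fin 4) (Fin 4) ℂ := !![1,0,0,0; 0,1,0,0; 0,0,-1,0; 0,0,0,-1]

/-- The 11-dimensional span `L`. -/
def LJW : Submodule ℂ (Matrix (Fin 4) (Fin 4) ℂ) :=
  Submodule.span ℂ {mII, mIX, mIY, mXZ, mYZ, mIZ, mXY, mYY, mXX, mYX, mZI}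

/-- The vector `|F0⟩ = |1⟩|4⟩ − |4⟩|1⟩ − |2⟩|3⟩ + |3⟩|2⟩` in `ℂ⁴ ⊗ ℂ⁴ ≅ (Fin 4 × Fin 4) → ℂ`. -/
def F0 : Fin 4 × Fin 4 → ℂ := fun p =>
  if p = (0, 3) then 1 else if p = (3, 0) then -1
  else if p = (1, 2) then -1 else if p = (2, 1) then 1 else 0

set_option maxHeartbeats 1600000 in
private lemma Tl_aux :
    ∀ (A B : Matrix (Fin 4) (Fin 4) ℂ),
      ((A + B) ⊗ₖ (1 : Matrix (Fin 4) (Fin 4) ℂ) +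
        (1 : Matrix (Fin 4) (Fin 4) ℂ) ⊗ₖ (A + B)).mulVec F0 =
      (A ⊗ₖ (1 : Matrix (Fin 4) (Fin 4) ℂ) +
        (1 : Matrix (Fin 4) (Fin 4) ℂ) ⊗ₖ A).mulVec F0 +
      (B ⊗ₖ (1 : Matrix (Fin 4) (Fin 4) ℂ) +
        (1 : Matrix (Fin 4) (Fin 4) ℂ) ⊗ₖ B).mulVec F0 := by
  intro A B
  rw [Matrix.add_kronecker, Matrix.kronecker_add, ← Matrix.add_mulVec, add_add_add_comm]

/-- The linear map `A ↦ (A ⊗ I + I ⊗ A) |F0⟩`. -/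
private def Tl : Matrix (Fin 4) (Fin 4) ℂ →ₗ[ℂ] (Fin 4 × Fin 4 → ℂ) where
  toFun A := (A ⊗ₖ (1 : Matrix (Fin 4) (Fin 4) ℂ) +
      (1 : Matrix (Fin 4) (Fin 4) ℂ) ⊗ₖ A).mulVec F0
  map_add' A B := Tl_aux A B
  map_smul' c A := by
    simp only [RingHom.id_apply]
    rw [Matrix.smul_kronecker, Matrix.kronecker_smul, ← smul_add,
      Matrix.smul_mulVec]

set_option maxHeartbeats 3200000 in
private lemma Tl_zero :
    ∀ M ∈ ({mIX, mIY, mXZ, mYZ, mIZ, mXY, mYY, mXX, mYX, mZI} :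
        Set (Matrix (Fin 4) (Fin 4) ℂ)),
      (M ⊗ₖ (1 : Matrix (Fin 4) (Fin 4) ℂ) +
        (1 : Matrix (Fin 4) (Fin 4) ℂ) ⊗ₖ M).mulVec F0 = 0 := by
  intro M hM
  simp only [Set.mem_insert_iff, Set.mem_singleton_iff] at hM
  rcases hM with rfl|rfl|rfl|rfl|rfl|rfl|rfl|rfl|rfl|rfl <;>
    funext p <;> obtain ⟨i, j⟩ := p <;> fin_cases i <;> fin_cases j <;>
    simp [Matrix.mulVec, dotProduct, Fintype.sum_prod_type, Fin.sum_univ_four,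
      F0, mIX, mIY, mXZ, mYZ, mIZ, mXY, mYY, mXX, mYX, mZI, Matrix.one_apply,
      Matrix.vecHead, Matrix.vecTail]

private lemma Tl_one :
    ((1 : Matrix (Fin 4) (Fin 4) ℂ) ⊗ₖ (1 : Matrix (Fin 4) (Fin 4) ℂ) +
      (1 : Matrix (Fin 4) (Fin 4) ℂ) ⊗ₖ (1 : Matrix (Fin 4) (Fin 4) ℂ)).mulVec F0
      = (2 : ℂ) • F0 := by
  rw [Matrix.one_kronecker_one, Matrix.add_mulVec, Matrix.one_mulVec, two_smul]

set_option maxHeartbeats 3200000 in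
theorem mem_LJW_iff_F0_eigencondition :
    (∀ A : Matrix (Fin 4) (Fin 4) ℂ,
      A ∈ LJW ↔ ∃ lam : ℂ,
        (A ⊗ₖ (1 : Matrix (Fin 4) (Fin 4) ℂ) +
          (1 : Matrix (Fin 4) (Fin 4) ℂ) ⊗ₖ A).mulVec F0 = lam • F0) ∧
    (∀ M ∈ ({mIX, mIY, mXZ, mYZ, mIZ, mXY, mYY, mXX, mYX, mZI} :
        Set (Matrix (Fin 4) (Fin 4) ℂ)),
      (M ⊗ₖ (1 : Matrix (Fin 4) (Fin 4) ℂ) +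
        (1 : Matrix (Fin 4) (Fin 4) ℂ) ⊗ₖ M).mulVec F0 = 0) := by
  refine ⟨fun A => ⟨fun hA => ?_, fun ⟨lam, h⟩ => ?_⟩, Tl_zero⟩
  · -- forward: A ∈ LJW → eigencondition
    have hle : LJW ≤ Submodule.comap Tl (Submodule.span ℂ {F0}) := by
      rw [LJW, Submodule.span_le]
      intro M hM
      simp only [Set.mem_insert_iff, Set.mem_singleton_iff] at hM
      rcases hM with rfl|hM
      · simp only [SetLike.mem_coe, Submodule.mem_comap]
        have : Tl mII = (2 : ℂ) • F0 := Tl_one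
        rw [this]
        exact Submodule.smul_mem _ _ (Submodule.mem_span_singleton_self F0)
      · simp only [SetLike.mem_coe, Submodule.mem_comap]
        have : Tl M = 0 := Tl_zero M (by simpa using hM)
        rw [this]
        exact Submodule.zero_mem _
    have := hle hA
    rw [Submodule.mem_comap, Submodule.mem_span_singleton] at this
    obtain ⟨lam, hlam⟩ := this
    exact ⟨lam, hlam.symm⟩
  · -- reverse: eigencondition → A ∈ LJW
    have e1 := congrFun h (0,1)
    have e2 := congrFun h (0,2)
    have e3 := congrFun h (1,3)
    have e4 := congrFun h (2,3)
    have e5 := congrFun h (0,3)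
    have e6 := congrFun h (1,2)
    simp [Matrix.mulVec, dotProduct, Fintype.sum_prod_type, Fin.sum_univ_four,
      F0, Matrix.one_apply] at e1 e2 e3 e4 e5 e6
    have hA : A = ((A 0 0 + A 3 3)/2) • mII + ((A 0 0 - A 1 1)/2) • mIZ
        + ((A 0 0 - A 2 2)/2) • mZI
        + ((A 0 1 + A 1 0)/2) • mIX + (I*(A 0 1 - A 1 0)/2) • mIY
        + ((A 0 2 + A 2 0)/2) • mXZ + (I*(A 0 2 - A 2 0)/2) • mYZ
        + (I*(A 0 3 + A 2 1 - A 1 2 - A 3 0)/4) • mXY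
        + ((A 1 2 + A 2 1 - A 0 3 - A 3 0)/4) • mYY
        + ((A 0 3 + A 1 2 + A 2 1 + A 3 0)/4) • mXX
        + (I*(A 0 3 + A 1 2 - A 2 1 - A 3 0)/4) • mYX := by
      ext i j
      fin_cases i <;> fin_cases j <;>
        simp [mII, mIX, mIY, mXZ, mYZ, mIZ, mXY, mYY, mXX, mYX, mZI,
          Matrix.one_apply, Matrix.vecHead, Matrix.vecTail] <;>
        (try ring_nf) <;> (try simp only [Complex.I_sq]) <;> (try ring_nf) <;>
        first
          | ring1
          | linear_combination e1 | linear_combination -e1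
          | linear_combination e2 | linear_combination -e2
          | linear_combination e3 | linear_combination -e3
          | linear_combination e4 | linear_combination -e4
          | linear_combination (e5+e6)/2 | linear_combination -(e5+e6)/2
    have hmem : ∀ M ∈ ({mII, mIX, mIY, mXZ, mYZ, mIZ, mXY, mYY, mXX, mYX, mZI} :
        Set (Matrix (Fin 4) (Fin 4) ℂ)), M ∈ LJW := fun M hM =>
      Submodule.subset_span hM
    rw [hA]
    repeat' apply Submodule.add_mem
    all_goals exact Submodule.smul_mem _ _ (hmem _ (by simp))
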